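/- Let X be a real Hilbert space and F : X → X* satisfy (F1)–(F5). Let 0 < δ_min ≤ δ_max < ∞ and C_H > 0 be constants. Suppose {u^n} ⊂ X is a sequence of damped Newton iterates u^{n+1} = u^n − δ(u^n) F'(u^n)^{-1} F(u^n) whose damping strategy satisfies δ(u^n) ∈ [δ_min, δ_max] for all n and the energy decay property H(u^n) − H(u^{n+1}) ≥ C_H ‖u^n − u^{n+1}‖_X² for all n ∈ ℕ. Then u^n → u* strongly in X as n → ∞, where u* ∈ X is the unique solution of F(u) = 0. -/

import Mathlib

/-!
Along every line the potential `H` is `ν`-strongly convex, because its Gateaux derivative `F` is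
strongly monotone; hence `H` is bounded below and the energy decay forces the steps
`‖uⁿ - uⁿ⁺¹‖` to zero. The Newton step gives `F uⁿ = δ⁻¹ F'(uⁿ)(uⁿ - uⁿ⁺¹)`, so the residuals
`F uⁿ` tend to zero as well. Strong monotonicity also gives `ν ‖u - v‖ ≤ ‖F u - F v‖`, so `F` is
antilipschitz and `(uⁿ)` is Cauchy; its limit is a zero of `F` by Lipschitz continuity, and the
only one by injectivity.
-/

open Filter Set Topology

theorem ContinuousLinearMap.norm_le_of_apply_le {E : Type*} [SeminormedAddCommGroup E]
    [NormedSpace ℝ E] {f : StrongDual ℝ E} {M : ℝ} (hM : 0 ≤ M) (h : ∀ w, f w ≤ M * ‖w‖) :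
    ‖f‖ ≤ M := by
  refine f.opNorm_le_bound hM fun w => abs_le.2 ⟨?_, h w⟩
  exact neg_le.2 (by simpa using h (-w))

theorem norm_le_div_mul_norm_smul_symm_apply {E E' : Type*} [NormedAddCommGroup E]
    [NormedSpace ℝ E] [NormedAddCommGroup E'] [NormedSpace ℝ E'] (T : E ≃L[ℝ] E') {β δ δmin : ℝ}
    (hT : ∀ v, ‖T v‖ ≤ β * ‖v‖) (hβ : 0 ≤ β) (hδmin : 0 < δmin) (hδ : δmin ≤ δ) (y : E') :
    ‖y‖ ≤ β / δmin * ‖δ • T.symm y‖ := by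
  calc ‖y‖ = ‖T (T.symm y)‖ := by rw [T.apply_symm_apply]
    _ ≤ β * ‖T.symm y‖ := hT _
    _ ≤ β * (δ / δmin * ‖T.symm y‖) := by
      gcongr
      exact le_mul_of_one_le_left (norm_nonneg _) ((one_le_div hδmin).2 hδ)
    _ = β / δmin * ‖δ • T.symm y‖ := by
      rw [norm_smul, Real.norm_of_nonneg (hδmin.le.trans hδ)]
      ring

theorem add_deriv_add_half_le_of_hasDerivAt {φ φ' : ℝ → ℝ} {m : ℝ}
    (hφ : ∀ s, HasDerivAt φ (φ' s) s) (hgrowth : ∀ s ∈ Ioo (0 : ℝ) 1, m * s ≤ φ' s - φ' 0) :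
    φ 0 + φ' 0 + m / 2 ≤ φ 1 := by
  set ψ : ℝ → ℝ := fun t => φ t - φ' 0 * t - m / 2 * t ^ 2
  have hψ : ∀ s, HasDerivAt ψ (φ' s - φ' 0 - m * s) s := fun s =>
    (((hφ s).sub ((hasDerivAt_id s).const_mul _)).sub
      ((hasDerivAt_pow 2 s).const_mul _)).congr_deriv (by simp; ring)
  have hmono : MonotoneOn ψ (Icc 0 1) := by
    refine monotoneOn_of_hasDerivWithinAt_nonneg (convex_Icc 0 1)
      (fun s _ => (hψ s).continuousAt.continuousWithinAt)
      (fun s _ => (hψ s).hasDerivWithinAt) fun s hs => ?_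
    rw [interior_Icc] at hs
    linarith [hgrowth s hs]
  have := hmono (left_mem_Icc.2 zero_le_one) (right_mem_Icc.2 zero_le_one) zero_le_one
  simp only [ψ] at this
  linarith

theorem tendsto_zero_of_mul_sq_le_sub_succ {a c : ℕ → ℝ} {C : ℝ} (hC : 0 < C)
    (hc : ∀ n, 0 ≤ c n) (ha : BddBelow (range a)) (h : ∀ n, C * c n ^ 2 ≤ a n - a (n + 1)) :
    Tendsto c atTop (𝓝 0) := by
  have hanti : Antitone a := antitone_nat_of_succ_le fun n => by nlinarith [h n, sq_nonneg (c n)]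
  have hlim := tendsto_atTop_ciInf hanti ha
  have hdiff : Tendsto (fun n => Real.sqrt ((a n - a (n + 1)) / C)) atTop (𝓝 0) := by
    simpa using ((hlim.sub (hlim.comp (tendsto_add_atTop_nat 1))).div_const C).sqrt
  refine squeeze_zero hc (fun n => Real.le_sqrt_of_sq_le ?_) hdiff
  rw [le_div_iff₀ hC]
  linarith [h n]

section StronglyMonotone

variable {E : Type*} [NormedAddCommGroup E] [NormedSpace ℝ E] {F : E → StrongDual ℝ E} {ν : ℝ}

theorem lipschitzWith_of_abs_apply_sub_le {L : ℝ} (hL : 0 ≤ L)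
    (hF : ∀ u v w, |F u w - F v w| ≤ L * ‖u - v‖ * ‖w‖) :
    LipschitzWith (Real.toNNReal L) F := by
  refine LipschitzWith.of_dist_le_mul fun u v => ?_
  rw [Real.coe_toNNReal _ hL, dist_eq_norm, dist_eq_norm]
  exact (F u - F v).opNorm_le_bound (by positivity) (hF u v)

theorem mul_norm_sub_le_norm_sub_of_strongMono
    (hF : ∀ u v, ν * ‖u - v‖ ^ 2 ≤ F u (u - v) - F v (u - v)) (u v : E) :
    ν * ‖u - v‖ ≤ ‖F u - F v‖ := by
  rcases (norm_nonneg (u - v)).eq_or_lt with h | h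
  · rw [← h, mul_zero]; exact norm_nonneg _
  · refine le_of_mul_le_mul_right ?_ h
    calc ν * ‖u - v‖ * ‖u - v‖ = ν * ‖u - v‖ ^ 2 := by ring
      _ ≤ (F u - F v) (u - v) := hF u v
      _ ≤ ‖F u - F v‖ * ‖u - v‖ := (le_abs_self _).trans ((F u - F v).le_opNorm _)

theorem antilipschitzWith_of_strongMono (hν : 0 < ν)
    (hF : ∀ u v, ν * ‖u - v‖ ^ 2 ≤ F u (u - v) - F v (u - v)) :
    AntilipschitzWith (Real.toNNReal ν⁻¹) F := by
  refine AntilipschitzWith.of_le_mul_dist fun u v => ?_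
  rw [Real.coe_toNNReal _ (inv_nonneg.2 hν.le), dist_eq_norm, dist_eq_norm,
    inv_mul_eq_div, le_div_iff₀ hν, mul_comm]
  exact mul_norm_sub_le_norm_sub_of_strongMono hF u v

variable {H : E → ℝ}

theorem hasDerivAt_comp_add_smul (hH : ∀ u v, HasDerivAt (fun t : ℝ => H (u + t • v)) (F u v) 0)
    (a w : E) (s : ℝ) : HasDerivAt (fun t : ℝ => H (a + t • w)) (F (a + s • w) w) s := by
  have h0 := hH (a + s • w) w
  rw [← sub_self s] at h0
  simpa only [sub_smul, add_add_sub_cancel] using h0.comp_sub_const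

theorem add_apply_add_half_le_of_strongMono
    (hH : ∀ u v, HasDerivAt (fun t : ℝ => H (u + t • v)) (F u v) 0)
    (hF : ∀ u v, ν * ‖u - v‖ ^ 2 ≤ F u (u - v) - F v (u - v)) (a w : E) :
    H a + F a w + ν * ‖w‖ ^ 2 / 2 ≤ H (a + w) := by
  have key := add_deriv_add_half_le_of_hasDerivAt (m := ν * ‖w‖ ^ 2)
    (hasDerivAt_comp_add_smul hH a w) fun s hs => by
      have h := hF (a + s • w) a
      simp only [add_sub_cancel_left, map_smul, smul_eq_mul, norm_smul, Real.norm_eq_abs,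
        abs_of_pos hs.1, zero_smul, add_zero] at h ⊢
      nlinarith [hs.1]
  simpa using key

theorem bddBelow_range_of_strongMono (hν : 0 < ν)
    (hH : ∀ u v, HasDerivAt (fun t : ℝ => H (u + t • v)) (F u v) 0)
    (hF : ∀ u v, ν * ‖u - v‖ ^ 2 ≤ F u (u - v) - F v (u - v)) :
    BddBelow (range H) := by
  set a : E := 0
  refine ⟨H a - ‖F a‖ ^ 2 / (2 * ν), ?_⟩
  rintro _ ⟨v, rfl⟩
  have hconv := add_apply_add_half_le_of_strongMono hH hF a (v - a)
  rw [add_sub_cancel] at hconv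
  have hpair : -(‖F a‖ * ‖v - a‖) ≤ F a (v - a) :=
    neg_le_of_abs_le ((F a).le_opNorm _)
  have hsq : ‖F a‖ * ‖v - a‖ - ν * ‖v - a‖ ^ 2 / 2 ≤ ‖F a‖ ^ 2 / (2 * ν) := by
    rw [le_div_iff₀ (by positivity)]
    nlinarith [sq_nonneg (ν * ‖v - a‖ - ‖F a‖)]
  linarith

end StronglyMonotone

theorem generalised_dampedNewton_converges_general
    {X : Type*} [NormedAddCommGroup X] [InnerProductSpace ℝ X] [CompleteSpace X]
    (F : X → StrongDual ℝ X) (F' : X → X ≃L[ℝ] StrongDual ℝ X)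
    (H : X → ℝ) (L ν βF' : ℝ)
    (hL : 0 < L) (hν : 0 < ν) (hβF' : 0 < βF')
    -- (F1) Lipschitz continuity
    (hLip : ∀ u v w : X, |F u w - F v w| ≤ L * ‖u - v‖ * ‖w‖)
    -- (F2) strong monotonicity
    (hMono : ∀ u v : X, ν * ‖u - v‖ ^ 2 ≤ F u (u - v) - F v (u - v))
    -- (F3) Gateaux differentiability with uniformly coercive and bounded derivative
    (hbounded : ∀ u v w : X, F' u v w ≤ βF' * ‖v‖ * ‖w‖)
    -- (F5) F is a potential operator with potential H
    (hH : ∀ u v : X, HasDerivAt (fun t : ℝ => H (u + t • v)) (F u v) 0)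
    -- damping strategy and constants
    (δ : X → ℝ) (δmin δmax CH : ℝ)
    (hδmin : 0 < δmin) (hCH : 0 < CH)
    -- damped Newton iterates
    (u : ℕ → X)
    (hiter : ∀ n : ℕ, u (n + 1) = u n - δ (u n) • (F' (u n)).symm (F (u n)))
    (hδrange : ∀ n : ℕ, δ (u n) ∈ Set.Icc δmin δmax)
    -- energy decay property
    (hdecay : ∀ n : ℕ, CH * ‖u n - u (n + 1)‖ ^ 2 ≤ H (u n) - H (u (n + 1))) :
    ∃ ustar : X, (∀ v : X, F ustar v = 0) ∧
      (∀ w : X, (∀ v : X, F w v = 0) → w = ustar) ∧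
      Filter.Tendsto u Filter.atTop (nhds ustar) := by
  have hstep : Tendsto (fun n => ‖u n - u (n + 1)‖) atTop (𝓝 0) :=
    tendsto_zero_of_mul_sq_le_sub_succ hCH (fun n => norm_nonneg _)
      ((bddBelow_range_of_strongMono hν hH hMono).mono (range_comp_subset_range u H)) hdecay
  have hresidual : Tendsto (fun n => F (u n)) atTop (𝓝 0) := by
    refine squeeze_zero_norm (fun n => ?_) (by simpa using hstep.const_mul (βF' / δmin))
    rw [hiter n, sub_sub_cancel]
    exact norm_le_div_mul_norm_smul_symm_apply (F' (u n))
      (fun v => ContinuousLinearMap.norm_le_of_apply_le (by positivity) (hbounded (u n) v))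
      hβF'.le hδmin (hδrange n).1 _
  have hlip := lipschitzWith_of_abs_apply_sub_le hL.le hLip
  have hanti := antilipschitzWith_of_strongMono hν hMono
  have hcauchy : CauchySeq u := (hanti.isUniformInducing hlip.uniformContinuous).cauchy_map_iff.1
    (by rw [map_map]; exact hresidual.cauchySeq)
  obtain ⟨ustar, hlim⟩ := cauchySeq_tendsto_of_complete hcauchy
  have hzero : F ustar = 0 :=
    tendsto_nhds_unique ((hlip.continuous.tendsto ustar).comp hlim) hresidual
  refine ⟨ustar, fun v => by rw [hzero]; rfl, fun w hw => hanti.injective ?_, hlim⟩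
  rw [hzero]
  exact ContinuousLinearMap.ext hw

/-- Generalised convergence theorem: under (F1)–(F5), any damped
Newton sequence with step sizes in `[δ_min, δ_max]` satisfying the energy decay
`H(uⁿ) − H(uⁿ⁺¹) ≥ C_H ‖uⁿ − uⁿ⁺¹‖²` converges strongly to the unique solution. -/
theorem generalised_dampedNewton_converges
    {X : Type*} [NormedAddCommGroup X] [InnerProductSpace ℝ X] [CompleteSpace X]
    (F : X → StrongDual ℝ X) (F' : X → X ≃L[ℝ] StrongDual ℝ X)
    (G H : X → ℝ) (L ν αF' βF' : ℝ)
    (hL : 0 < L) (hν : 0 < ν) (hαF' : 0 < αF') (hβF' : 0 < βF')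
    -- (F1) Lipschitz continuity
    (hLip : ∀ u v w : X, |F u w - F v w| ≤ L * ‖u - v‖ * ‖w‖)
    -- (F2) strong monotonicity
    (hMono : ∀ u v : X, ν * ‖u - v‖ ^ 2 ≤ F u (u - v) - F v (u - v))
    -- (F3) Gateaux differentiability with uniformly coercive and bounded derivative
    (hGateaux : ∀ u v : X, HasDerivAt (fun t : ℝ => F (u + t • v)) (F' u v) 0)
    (hcoercive : ∀ u v : X, αF' * ‖v‖ ^ 2 ≤ F' u v v)
    (hbounded : ∀ u v w : X, F' u v w ≤ βF' * ‖v‖ * ‖w‖)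
    -- (F4) G'(u) = F'(u)u, with G' weakly continuous
    (hG : ∀ u v : X, HasDerivAt (fun t : ℝ => G (u + t • v)) (F' u u v) 0)
    (hGweak : ∀ v : X, Continuous fun u : X => F' u u v)
    -- (F5) F is a potential operator with potential H
    (hH : ∀ u v : X, HasDerivAt (fun t : ℝ => H (u + t • v)) (F u v) 0)
    -- damping strategy and constants
    (δ : X → ℝ) (δmin δmax CH : ℝ)
    (hδmin : 0 < δmin) (hδminmax : δmin ≤ δmax) (hCH : 0 < CH)
    -- damped Newton iterates
    (u : ℕ → X)
    (hiter : ∀ n : ℕ, u (n + 1) = u n - δ (u n) • (F' (u n)).symm (F (u n)))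
    (hδrange : ∀ n : ℕ, δ (u n) ∈ Set.Icc δmin δmax)
    -- energy decay property
    (hdecay : ∀ n : ℕ, CH * ‖u n - u (n + 1)‖ ^ 2 ≤ H (u n) - H (u (n + 1))) :
    ∃ ustar : X, (∀ v : X, F ustar v = 0) ∧
      (∀ w : X, (∀ v : X, F w v = 0) → w = ustar) ∧
      Filter.Tendsto u Filter.atTop (nhds ustar) :=
  generalised_dampedNewton_converges_general F F' H L ν βF' hL hν hβF' hLip hMono hbounded hH δ δmin
    δmax CH hδmin hCH u hiter hδrange hdecay
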